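/- arXiv:2007.11732 — 5 statements merged into one kernel-verified Lean document; each statement's English description precedes it below -/
import Mathlib

section
/- Define the following polynomials in k[x₁,x₂,x₃]: A₁₁ := −3φι(1−ρ)⁻¹·x₁, A₂₂ := −3φι(1−ρ)⁻¹·x₂, A₃₃ := −3φι(1−ρ)⁻¹·x₃, A₃₂ := ψι·x₁, B₁₂ := −ρψι(1−ρ)⁻¹·x₃, B₁₃ := −ρ²ψι(1−ρ)⁻¹·x₂, C₁₂ := −ψι(1−ρ²)⁻¹·x₃, C₁₃ := −ρ²ψι(1−ρ²)⁻¹·x₂ (note 1−ρ and 1−ρ² are nonzero in k). Then A₁₁A₂₂A₃₃ − A₂₂B₁₃C₁₃ − A₃₃B₁₂C₁₂ + A₃₂B₁₂C₁₃ is congruent, modulo the Jacobian ideal J, to (27φ³ − ψ³)·ι·((1−ρ)⁻¹)³·x₁x₂x₃. (This is the computation of the structure constant σ_{χ,χ²} of the orbifold Jacobian algebra Jac(W, ℤ/3), giving ξ_χ • ξ_{χ²} = ((27φ³ − ψ³)ι/(1−ρ)³)·x₁x₂x₃.) -/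
/-!
Put `u = (1 - ρ)⁻¹`. From `ρ² + ρ + 1 = 0` one gets `(1 - ρ²)⁻¹ = -ρu` and `u²(1 - ρ) = u`,
so every coefficient becomes a polynomial in `ρ, ι, u`, reduced by `ρ³ = 1` and `ι² = -1`.
After these reductions the difference of the two sides is `-ρ²ψ²u³ · (x₂ ∂₂W + x₃ ∂₃W)`
(the constant is `ρψ² / (3(1 - ρ))` when `3 ≠ 0`), an element of the Jacobian ideal.
-/

open MvPolynomial

section HesseCubic

variable {R : Type*} [CommRing R]

noncomputable def hesseCubic (a b : R) : MvPolynomial (Fin 3) R :=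
  C a * (X 0 ^ 3 + X 1 ^ 3 + X 2 ^ 3) + C b * (X 0 * X 1 * X 2)

theorem pderiv_one_hesseCubic (a b : R) :
    pderiv 1 (hesseCubic a b) = C (3 * a) * X 1 ^ 2 + C b * (X 0 * X 2) := by
  simp only [hesseCubic, map_add, Derivation.leibniz, Derivation.leibniz_pow, pderiv_C, pderiv_X,
    Pi.single_apply, Fin.reduceEq, if_true, if_false, smul_eq_mul, nsmul_eq_mul, map_mul, map_ofNat]
  ring

theorem pderiv_two_hesseCubic (a b : R) :
    pderiv 2 (hesseCubic a b) = C (3 * a) * X 2 ^ 2 + C b * (X 0 * X 1) := by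
  simp only [hesseCubic, map_add, Derivation.leibniz, Derivation.leibniz_pow, pderiv_C, pderiv_X,
    Pi.single_apply, Fin.reduceEq, if_true, if_false, smul_eq_mul, nsmul_eq_mul, map_mul, map_ofNat]
  ring

theorem X_one_mul_pderiv_add_X_two_mul_pderiv_hesseCubic (a b : R) :
    X 1 * pderiv 1 (hesseCubic a b) + X 2 * pderiv 2 (hesseCubic a b)
      = C (3 * a) * (X 1 ^ 3 + X 2 ^ 3) + C (2 * b) * (X 0 * X 1 * X 2) := by
  rw [pderiv_one_hesseCubic, pderiv_two_hesseCubic, map_mul C 2 b, map_ofNat]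
  ring

end HesseCubic

theorem inv_one_sub_sq_eq_of_sq_add_add_one_eq_zero {k : Type*} [Field k] {ρ : k}
    (hρ : ρ ^ 2 + ρ + 1 = 0) : (1 - ρ ^ 2)⁻¹ = -(ρ * (1 - ρ)⁻¹) := by
  have hfactor : 1 - ρ ^ 2 = (1 - ρ) * -ρ ^ 2 := by linear_combination (1 - ρ) * hρ
  have hinv : (ρ ^ 2)⁻¹ = ρ := inv_eq_of_mul_eq_one_right (by linear_combination (ρ - 1) * hρ)
  rw [hfactor, mul_inv, inv_neg, hinv]
  ring

namespace HesseOrbifold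

variable {k : Type*} [Field k] {ι ρ : k}

theorem coeff_X1_cube (φ ψ : k) (hι : ι ^ 2 = -1) (hρ : ρ ^ 2 + ρ + 1 = 0) :
    -(3 * φ * ι) * (1 - ρ)⁻¹ * (-(ρ ^ 2 * ψ * ι) * (1 - ρ)⁻¹)
        * (-(ρ ^ 2 * ψ * ι) * (1 - ρ ^ 2)⁻¹)
      = -(3 * ρ ^ 2 * φ * ψ ^ 2 * ι * (1 - ρ)⁻¹ ^ 3) := by
  rw [inv_one_sub_sq_eq_of_sq_add_add_one_eq_zero hρ]
  linear_combination (3 * ρ ^ 5 * φ * ψ ^ 2 * ι * (1 - ρ)⁻¹ ^ 3) * hι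
    - (3 * ρ ^ 2 * φ * ψ ^ 2 * ι * (1 - ρ)⁻¹ ^ 3 * (ρ - 1)) * hρ

theorem coeff_X2_cube (φ ψ : k) (hι : ι ^ 2 = -1) (hρ : ρ ^ 2 + ρ + 1 = 0) :
    -(3 * φ * ι) * (1 - ρ)⁻¹ * (-(ρ * ψ * ι) * (1 - ρ)⁻¹)
        * (-(ψ * ι) * (1 - ρ ^ 2)⁻¹)
      = -(3 * ρ ^ 2 * φ * ψ ^ 2 * ι * (1 - ρ)⁻¹ ^ 3) := by
  rw [inv_one_sub_sq_eq_of_sq_add_add_one_eq_zero hρ]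
  linear_combination (3 * ρ ^ 2 * φ * ψ ^ 2 * ι * (1 - ρ)⁻¹ ^ 3) * hι

theorem coeff_X012 (φ ψ : k) (hι : ι ^ 2 = -1) (hρ : ρ ^ 2 + ρ + 1 = 0) :
    (-(3 * φ * ι) * (1 - ρ)⁻¹) ^ 3
        + ψ * ι * (-(ρ * ψ * ι) * (1 - ρ)⁻¹) * (-(ρ ^ 2 * ψ * ι) * (1 - ρ ^ 2)⁻¹)
        - (27 * φ ^ 3 - ψ ^ 3) * ι * (1 - ρ)⁻¹ ^ 3
      = -(2 * ρ ^ 2 * ψ ^ 3 * ι * (1 - ρ)⁻¹ ^ 3) := by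
  have hu : (1 - ρ)⁻¹ * (1 - ρ) * (1 - ρ)⁻¹ = (1 - ρ)⁻¹ := by
    simpa using mul_inv_mul_cancel (1 - ρ)⁻¹
  rw [inv_one_sub_sq_eq_of_sq_add_add_one_eq_zero hρ]
  linear_combination (-27 * φ ^ 3 * ι * (1 - ρ)⁻¹ ^ 3 - ρ ^ 4 * ψ ^ 3 * ι * (1 - ρ)⁻¹ ^ 2) * hι
    + (ρ * (ρ - 1) * ψ ^ 3 * ι * (1 - ρ)⁻¹ ^ 2 + ψ ^ 3 * ι * (1 - ρ)⁻¹ ^ 3) * hρ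
    - (ρ * ψ ^ 3 * ι * (1 - ρ)⁻¹) * hu

end HesseOrbifold

theorem stmt1_general (k : Type*) [Field k] (ι ρ φ ψ : k)
    (hι : ι ^ 2 = -1) (hρ : ρ ^ 2 + ρ + 1 = 0)
    (W : MvPolynomial (Fin 3) k)
    (hW : W = -(C φ * C ι) * (X 0 ^ 3 + X 1 ^ 3 + X 2 ^ 3)
        + C ψ * C ι * (X 0 * X 1 * X 2))
    (J : Ideal (MvPolynomial (Fin 3) k))
    (hJ : J = Ideal.span {pderiv 0 W, pderiv 1 W, pderiv 2 W})
    (A11 A22 A33 A32 B12 B13 C12 C13 : MvPolynomial (Fin 3) k)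
    (hA11 : A11 = C (-(3 * φ * ι) * (1 - ρ)⁻¹) * X 0)
    (hA22 : A22 = C (-(3 * φ * ι) * (1 - ρ)⁻¹) * X 1)
    (hA33 : A33 = C (-(3 * φ * ι) * (1 - ρ)⁻¹) * X 2)
    (hA32 : A32 = C (ψ * ι) * X 0)
    (hB12 : B12 = C (-(ρ * ψ * ι) * (1 - ρ)⁻¹) * X 2)
    (hB13 : B13 = C (-(ρ ^ 2 * ψ * ι) * (1 - ρ)⁻¹) * X 1)
    (hC12 : C12 = C (-(ψ * ι) * (1 - ρ ^ 2)⁻¹) * X 2)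
    (hC13 : C13 = C (-(ρ ^ 2 * ψ * ι) * (1 - ρ ^ 2)⁻¹) * X 1) :
    A11 * A22 * A33 - A22 * B13 * C13 - A33 * B12 * C12 + A32 * B12 * C13
      - C ((27 * φ ^ 3 - ψ ^ 3) * ι * ((1 - ρ)⁻¹) ^ 3) * (X 0 * X 1 * X 2) ∈ J := by
  have hW' : W = hesseCubic (-(φ * ι)) (ψ * ι) := by
    rw [hW, hesseCubic, map_neg, map_mul, map_mul]
  have hEuler : X 1 * pderiv 1 W + X 2 * pderiv 2 W ∈ J := by
    rw [hJ]
    exact add_mem (Ideal.mul_mem_left _ _ (Ideal.subset_span (by simp)))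
      (Ideal.mul_mem_left _ _ (Ideal.subset_span (by simp)))
  convert J.mul_mem_left (C (-(ρ ^ 2 * ψ ^ 2 * (1 - ρ)⁻¹ ^ 3))) hEuler using 1
  rw [hW', X_one_mul_pderiv_add_X_two_mul_pderiv_hesseCubic,
    hA11, hA22, hA33, hA32, hB12, hB13, hC12, hC13]
  linear_combination
    (norm := (simp only [map_mul, map_neg, map_add, map_sub, map_pow, map_ofNat]; ring1))
    -(X 1 ^ 3) * congrArg C (HesseOrbifold.coeff_X1_cube φ ψ hι hρ)
      - X 2 ^ 3 * congrArg C (HesseOrbifold.coeff_X2_cube φ ψ hι hρ)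
      + X 0 * X 1 * X 2 * congrArg C (HesseOrbifold.coeff_X012 φ ψ hι hρ)

/-- Computation of the structure constant `σ_{χ,χ²}` of the orbifold Jacobian algebra
`Jac(W, ℤ/3)` for `W = −φι(x₁³+x₂³+x₃³) + ψι·x₁x₂x₃`:
`A₁₁A₂₂A₃₃ − A₂₂B₁₃C₁₃ − A₃₃B₁₂C₁₂ + A₃₂B₁₂C₁₃` is congruent modulo the Jacobian ideal `J`
to `(27φ³ − ψ³)·ι·((1−ρ)⁻¹)³·x₁x₂x₃`. -/
theorem stmt1 (k : Type*) [Field k] [CharZero k] (ι ρ φ ψ : k)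
    (hι : ι ^ 2 = -1) (hρ : ρ ^ 2 + ρ + 1 = 0)
    (W : MvPolynomial (Fin 3) k)
    (hW : W = -(C φ * C ι) * (X 0 ^ 3 + X 1 ^ 3 + X 2 ^ 3)
        + C ψ * C ι * (X 0 * X 1 * X 2))
    (J : Ideal (MvPolynomial (Fin 3) k))
    (hJ : J = Ideal.span {pderiv 0 W, pderiv 1 W, pderiv 2 W})
    (A11 A22 A33 A32 B12 B13 C12 C13 : MvPolynomial (Fin 3) k)
    (hA11 : A11 = C (-(3 * φ * ι) * (1 - ρ)⁻¹) * X 0)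
    (hA22 : A22 = C (-(3 * φ * ι) * (1 - ρ)⁻¹) * X 1)
    (hA33 : A33 = C (-(3 * φ * ι) * (1 - ρ)⁻¹) * X 2)
    (hA32 : A32 = C (ψ * ι) * X 0)
    (hB12 : B12 = C (-(ρ * ψ * ι) * (1 - ρ)⁻¹) * X 2)
    (hB13 : B13 = C (-(ρ ^ 2 * ψ * ι) * (1 - ρ)⁻¹) * X 1)
    (hC12 : C12 = C (-(ψ * ι) * (1 - ρ ^ 2)⁻¹) * X 2)
    (hC13 : C13 = C (-(ρ ^ 2 * ψ * ι) * (1 - ρ ^ 2)⁻¹) * X 1) :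
    A11 * A22 * A33 - A22 * B13 * C13 - A33 * B12 * C12 + A32 * B12 * C13
      - C ((27 * φ ^ 3 - ψ ^ 3) * ι * ((1 - ρ)⁻¹) ^ 3) * (X 0 * X 1 * X 2) ∈ J :=
  stmt1_general k ι ρ φ ψ hι hρ W hW J hJ A11 A22 A33 A32 B12 B13 C12 C13 hA11 hA22 hA33 hA32 hB12
    hB13 hC12 hC13
end

section
/- Assume φ ≠ 0. Then for all a, b ∈ k, the polynomial −aι(x₁³ + x₂³ + x₃³) + bι·x₁x₂x₃ is congruent, modulo the Jacobian ideal J, to ι·(b − a·ψ·φ⁻¹)·x₁x₂x₃. (Applied with a = q·∂φ/∂q and b = q·∂ψ/∂q, this gives the identity q·∂W/∂q = ιq(−(ψ/φ)·∂φ/∂q + ∂ψ/∂q)·x₁x₂x₃ in Jac(W) used to compute the Kodaira–Spencer image of the point class of T².) -/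
/-!
By Euler's identity `∑ xᵢ ∂ᵢW = 3W`, the cubic `W` itself lies in its Jacobian ideal once `3` is
invertible. The difference of the two sides of the congruence is `(a/φ)·W`.
-/

open MvPolynomial

namespace MvPolynomial

variable {σ : Type*} [Fintype σ]

theorem IsHomogeneous.nsmul_mem_span_pderiv {R : Type*} [CommSemiring R] {p : MvPolynomial σ R}
    {n : ℕ} (h : p.IsHomogeneous n) : n • p ∈ Ideal.span (Set.range fun i => pderiv i p) := by
  rw [← h.sum_X_mul_pderiv]
  exact Ideal.sum_mem _ fun i _ => Ideal.mul_mem_left _ _ (Ideal.subset_span ⟨i, rfl⟩)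

theorem IsHomogeneous.mem_span_pderiv {k : Type*} [Field k] {p : MvPolynomial σ k} {n : ℕ}
    (h : p.IsHomogeneous n) (hn : (n : k) ≠ 0) :
    p ∈ Ideal.span (Set.range fun i => pderiv i p) := by
  have hp : C (n : k)⁻¹ * (n • p) = p := by
    rw [← Nat.cast_smul_eq_nsmul k, smul_eq_C_mul, ← mul_assoc, ← map_mul, inv_mul_cancel₀ hn, C_1,
      one_mul]
  simpa only [hp] using Ideal.mul_mem_left _ (C (n : k)⁻¹) h.nsmul_mem_span_pderiv

end MvPolynomial

theorem isHomogeneous_hesse_cubic {R : Type*} [CommSemiring R] (c d : R) :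
    (C c * (X 0 ^ 3 + X 1 ^ 3 + X 2 ^ 3) + C d * (X 0 * X 1 * X 2) :
      MvPolynomial (Fin 3) R).IsHomogeneous 3 := by
  have hX (i : Fin 3) : (X i : MvPolynomial (Fin 3) R).IsHomogeneous 1 := isHomogeneous_X R i
  have hC (r : R) : (C r : MvPolynomial (Fin 3) R).IsHomogeneous 0 := isHomogeneous_C _ r
  have hcubes := (((hX 0).pow 3).add ((hX 1).pow 3)).add ((hX 2).pow 3)
  have hprod := ((hX 0).mul (hX 1)).mul (hX 2)
  exact ((hC c).mul hcubes).add ((hC d).mul hprod)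

theorem range_pderiv_fin_three {R : Type*} [CommSemiring R] (p : MvPolynomial (Fin 3) R) :
    Set.range (fun i => pderiv i p) = {pderiv 0 p, pderiv 1 p, pderiv 2 p} := by
  ext
  simp [Fin.exists_fin_succ, eq_comm]

theorem stmt2_general (k : Type*) [Field k] [CharZero k] (ι φ ψ : k)
    (hφ : φ ≠ 0)
    (W : MvPolynomial (Fin 3) k)
    (hW : W = -(C φ * C ι) * (X 0 ^ 3 + X 1 ^ 3 + X 2 ^ 3)
        + C ψ * C ι * (X 0 * X 1 * X 2))
    (J : Ideal (MvPolynomial (Fin 3) k))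
    (hJ : J = Ideal.span {pderiv 0 W, pderiv 1 W, pderiv 2 W}) :
    ∀ a b : k,
      (-(C a * C ι) * (X 0 ^ 3 + X 1 ^ 3 + X 2 ^ 3) + C b * C ι * (X 0 * X 1 * X 2))
        - C (ι * (b - a * ψ * φ⁻¹)) * (X 0 * X 1 * X 2) ∈ J := by
  intro a b
  have hW_mem : W ∈ J := by
    have hhom : W.IsHomogeneous 3 := by
      rw [hW, ← C_mul, ← C_mul, ← C_neg]
      exact isHomogeneous_hesse_cubic _ _
    rw [hJ, ← range_pderiv_fin_three]
    exact hhom.mem_span_pderiv (by norm_num)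
  have hφ_inv : (C φ⁻¹ * C φ : MvPolynomial (Fin 3) k) = 1 := by
    rw [← C_mul, inv_mul_cancel₀ hφ, C_1]
  have hdiff : (-(C a * C ι) * (X 0 ^ 3 + X 1 ^ 3 + X 2 ^ 3) + C b * C ι * (X 0 * X 1 * X 2))
      - C (ι * (b - a * ψ * φ⁻¹)) * (X 0 * X 1 * X 2) = C (a * φ⁻¹) * W := by
    rw [hW]
    simp only [map_mul, map_sub]
    linear_combination (C a * C ι * (X 0 ^ 3 + X 1 ^ 3 + X 2 ^ 3)) * hφ_inv
  rw [hdiff]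
  exact J.mul_mem_left _ hW_mem

/-- For `W = −φι(x₁³+x₂³+x₃³) + ψι·x₁x₂x₃` with `φ ≠ 0`, for all `a b ∈ k` the
polynomial `−aι(x₁³+x₂³+x₃³) + bι·x₁x₂x₃` is congruent modulo the Jacobian ideal `J`
to `ι·(b − a·ψ·φ⁻¹)·x₁x₂x₃`. -/
theorem stmt2 (k : Type*) [Field k] [CharZero k] (ι φ ψ : k) (hι : ι ^ 2 = -1)
    (hφ : φ ≠ 0)
    (W : MvPolynomial (Fin 3) k)
    (hW : W = -(C φ * C ι) * (X 0 ^ 3 + X 1 ^ 3 + X 2 ^ 3)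
        + C ψ * C ι * (X 0 * X 1 * X 2))
    (J : Ideal (MvPolynomial (Fin 3) k))
    (hJ : J = Ideal.span {pderiv 0 W, pderiv 1 W, pderiv 2 W}) :
    ∀ a b : k,
      (-(C a * C ι) * (X 0 ^ 3 + X 1 ^ 3 + X 2 ^ 3) + C b * C ι * (X 0 * X 1 * X 2))
        - C (ι * (b - a * ψ * φ⁻¹)) * (X 0 * X 1 * X 2) ∈ J :=
  stmt2_general k ι φ ψ hφ W hW J hJ
end

section
/- Assume φ ≠ 0, ψ ≠ 0 and ψ³ ≠ 27φ³. Then the quotient ring Jac(W) = k[x₁,x₂,x₃]/J is spanned as a k-vector space by the classes of the eight monomials 1, x₁, x₂, x₃, x₁², x₂², x₃², x₁x₂x₃. -/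
/-!
Write α = 3φι, β = ψι. The partial derivatives of W are β x_j x_l − α x_i², so the images a, b, c
of x₁, x₂, x₃ in Jac(W) satisfy α a² = β bc, α b² = β ca, α c² = β ab. Chaining these gives
α³ a²b = β³ a²b, so all monomials x_i² x_j with i ≠ j vanish once α³ ≠ β³, i.e. ψ³ ≠ 27φ³.
Multiplication by a then maps the eight monomials into their span (ab and ac are multiples of c²
and b², a³ is a multiple of abc, the rest vanish), and the relations are invariant under cyclic
permutation of a, b, c. A subspace containing 1 and stable under multiplication by the generators
of the algebra is everything.
-/

open MvPolynomial

theorem MvPolynomial.span_eq_top_of_mul_X_mem {σ R A : Type*} [CommSemiring R] [CommSemiring A]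
    [Algebra R A] (f : MvPolynomial σ R →ₐ[R] A) (hf : Function.Surjective f) {S : Set A}
    (h1 : 1 ∈ S) (hX : ∀ i, ∀ s ∈ S, f (X i) * s ∈ Submodule.span R S) :
    Submodule.span R S = ⊤ := by
  have hmul : ∀ i, ∀ m ∈ Submodule.span R S, f (X i) * m ∈ Submodule.span R S := fun i m hm => by
    induction hm using Submodule.span_induction with
    | mem s hs => exact hX i s hs
    | zero => simp
    | add x y _ _ hx hy => simpa [mul_add] using add_mem hx hy
    | smul r x _ hx => simpa [mul_smul_comm] using Submodule.smul_mem _ r hx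
  rw [eq_top_iff]
  rintro a -
  obtain ⟨p, rfl⟩ := hf a
  induction p using MvPolynomial.induction_on with
  | C r =>
    simpa [Algebra.algebraMap_eq_smul_one] using Submodule.smul_mem _ r (Submodule.subset_span h1)
  | add p q hp hq => simpa using add_mem hp hq
  | mul_X p i hp => simpa [mul_comm] using hmul i _ hp

section Hesse

variable {k A : Type*} [Field k] [CommRing A] [Algebra k A]

def HesseRelations (α β : k) (a b c : A) : Prop :=
  α • a ^ 2 = β • (b * c) ∧ α • b ^ 2 = β • (c * a) ∧ α • c ^ 2 = β • (a * b)

def hesseMonomials (a b c : A) : Set A := {1, a, b, c, a ^ 2, b ^ 2, c ^ 2, a * b * c}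

theorem hesseMonomials_rotate (a b c : A) : hesseMonomials b c a = hesseMonomials a b c := by
  ext m
  simp only [hesseMonomials, Set.mem_insert_iff, Set.mem_singleton_iff]
  rw [show b * c * a = a * b * c by ring]
  tauto

namespace HesseRelations

variable {α β : k} {a b c : A}

theorem rotate (h : HesseRelations α β a b c) : HesseRelations α β b c a :=
  ⟨h.2.1, h.2.2, h.1⟩

theorem swap (h : HesseRelations α β a b c) : HesseRelations α β a c b := by
  obtain ⟨ha, hb, hc⟩ := h
  exact ⟨by rw [ha, mul_comm], by rw [hc, mul_comm], by rw [hb, mul_comm]⟩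

theorem sq_mul_eq_zero (h : HesseRelations α β a b c) (hαβ : α ^ 3 ≠ β ^ 3) : a ^ 2 * b = 0 := by
  obtain ⟨ha, hb, hc⟩ := h
  simp only [Algebra.smul_def] at ha hb hc
  have : (α ^ 3 - β ^ 3) • (a ^ 2 * b) = 0 := by
    rw [Algebra.smul_def, map_sub, map_pow, map_pow]
    linear_combination algebraMap k A α ^ 2 * b * ha + algebraMap k A α * algebraMap k A β * c * hb
      + algebraMap k A β ^ 2 * a * hc
  exact (smul_eq_zero.1 this).resolve_left (sub_ne_zero.2 hαβ)

theorem mul_mem_span (h : HesseRelations α β a b c) (hα : α ≠ 0) (hβ : β ≠ 0)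
    (hαβ : α ^ 3 ≠ β ^ 3) :
    ∀ m ∈ hesseMonomials a b c, a * m ∈ Submodule.span k (hesseMonomials a b c) := by
  have mem : ∀ m ∈ hesseMonomials a b c, m ∈ Submodule.span k (hesseMonomials a b c) :=
    fun m hm => Submodule.subset_span hm
  intro m hm
  simp only [hesseMonomials, Set.mem_insert_iff, Set.mem_singleton_iff] at hm
  rcases hm with hm | hm | hm | hm | hm | hm | hm | hm <;> rw [hm]
  · rw [mul_one]; exact mem a (by simp [hesseMonomials])
  · rw [← sq]; exact mem (a ^ 2) (by simp [hesseMonomials])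
  · rw [show a * b = (β⁻¹ * α) • c ^ 2 by rw [mul_smul, h.2.2, inv_smul_smul₀ hβ]]
    exact Submodule.smul_mem _ _ (mem (c ^ 2) (by simp [hesseMonomials]))
  · rw [show a * c = (β⁻¹ * α) • b ^ 2 by rw [mul_smul, h.2.1, inv_smul_smul₀ hβ, mul_comm]]
    exact Submodule.smul_mem _ _ (mem (b ^ 2) (by simp [hesseMonomials]))
  · rw [show a * a ^ 2 = (α⁻¹ * β) • (a * b * c) by
      rw [mul_smul, eq_inv_smul_iff₀ hα, ← mul_smul_comm, h.1, mul_smul_comm, mul_assoc]]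
    exact Submodule.smul_mem _ _ (mem (a * b * c) (by simp [hesseMonomials]))
  · rw [mul_comm, h.rotate.swap.sq_mul_eq_zero hαβ]; exact zero_mem _
  · rw [mul_comm, h.rotate.rotate.sq_mul_eq_zero hαβ]; exact zero_mem _
  · rw [show a * (a * b * c) = a ^ 2 * b * c by ring, h.sq_mul_eq_zero hαβ, zero_mul]
    exact zero_mem _

theorem mul_mem_span_of_mem (h : HesseRelations α β a b c) (hα : α ≠ 0) (hβ : β ≠ 0)
    (hαβ : α ^ 3 ≠ β ^ 3) :
    ∀ x ∈ ({a, b, c} : Set A), ∀ m ∈ hesseMonomials a b c,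
      x * m ∈ Submodule.span k (hesseMonomials a b c) := by
  intro x hx
  simp only [Set.mem_insert_iff, Set.mem_singleton_iff] at hx
  rcases hx with hx | hx | hx <;> rw [hx]
  · exact h.mul_mem_span hα hβ hαβ
  · simpa only [hesseMonomials_rotate] using h.rotate.mul_mem_span hα hβ hαβ
  · simpa only [hesseMonomials_rotate] using h.rotate.rotate.mul_mem_span hα hβ hαβ

end HesseRelations

end Hesse

theorem smul_mk_X_sq_eq_of_sub_mem {k σ : Type*} [Field k] {J : Ideal (MvPolynomial σ k)}
    {α β : k} {i j l : σ} (h : C β * (X j * X l) - C α * X i ^ 2 ∈ J) :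
    α • Ideal.Quotient.mk J (X i) ^ 2
      = β • (Ideal.Quotient.mk J (X j) * Ideal.Quotient.mk J (X l)) := by
  have := Ideal.Quotient.eq_zero_iff_mem.2 h
  rw [C_mul', C_mul', ← Ideal.Quotient.mkₐ_eq_mk k, map_sub, map_smul, map_smul, map_mul, map_pow,
    Ideal.Quotient.mkₐ_eq_mk, sub_eq_zero] at this
  exact this.symm

/-- For `W = −φι(x₁³+x₂³+x₃³) + ψι·x₁x₂x₃` with `φ ≠ 0`, `ψ ≠ 0`, `ψ³ ≠ 27φ³`,
the quotient `Jac(W) = k[x₁,x₂,x₃]/J` is spanned as a `k`-vector space by the classes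
of `1, x₁, x₂, x₃, x₁², x₂², x₃², x₁x₂x₃`. -/
theorem stmt7 (k : Type*) [Field k] [CharZero k] (ι φ ψ : k) (hι : ι ^ 2 = -1)
    (hφ : φ ≠ 0) (hψ : ψ ≠ 0) (hψφ : ψ ^ 3 ≠ 27 * φ ^ 3)
    (W : MvPolynomial (Fin 3) k)
    (hW : W = -(C φ * C ι) * (X 0 ^ 3 + X 1 ^ 3 + X 2 ^ 3)
        + C ψ * C ι * (X 0 * X 1 * X 2))
    (J : Ideal (MvPolynomial (Fin 3) k))
    (hJ : J = Ideal.span {pderiv 0 W, pderiv 1 W, pderiv 2 W}) :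
    Submodule.span k
      ({Ideal.Quotient.mk J 1, Ideal.Quotient.mk J (X 0), Ideal.Quotient.mk J (X 1),
        Ideal.Quotient.mk J (X 2), Ideal.Quotient.mk J (X 0 ^ 2),
        Ideal.Quotient.mk J (X 1 ^ 2), Ideal.Quotient.mk J (X 2 ^ 2),
        Ideal.Quotient.mk J (X 0 * X 1 * X 2)} :
          Set (MvPolynomial (Fin 3) k ⧸ J)) = ⊤ := by
  have hι0 : ι ≠ 0 := by rintro rfl; norm_num at hι
  have hrel : ∀ i j l : Fin 3, pderiv i W = C (ψ * ι) * (X j * X l) - C (3 * φ * ι) * X i ^ 2 →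
      (3 * φ * ι) • Ideal.Quotient.mk J (X i) ^ 2
        = (ψ * ι) • (Ideal.Quotient.mk J (X j) * Ideal.Quotient.mk J (X l)) := by
    intro i j l h
    refine smul_mk_X_sq_eq_of_sub_mem (h ▸ hJ ▸ Ideal.subset_span ?_)
    fin_cases i <;> simp
  have hH : HesseRelations (3 * φ * ι) (ψ * ι) (Ideal.Quotient.mk J (X 0))
      (Ideal.Quotient.mk J (X 1)) (Ideal.Quotient.mk J (X 2)) := by
    refine ⟨hrel 0 1 2 ?_, hrel 1 2 0 ?_, hrel 2 0 1 ?_⟩ <;>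
      · subst hW
        simp only [map_add, map_neg, neg_mul, Derivation.leibniz, Derivation.leibniz_pow,
          derivation_C, pderiv_X, Pi.single_eq_same, Pi.single_eq_of_ne, ne_eq, Fin.reduceEq,
          one_ne_zero, zero_ne_one, not_false_eq_true, Nat.add_one_sub_one, smul_eq_mul,
          nsmul_eq_mul, Nat.cast_ofNat, mul_one, mul_zero, add_zero, zero_add, C_mul, map_ofNat]
        ring
  have hαβ : (3 * φ * ι) ^ 3 ≠ (ψ * ι) ^ 3 := by
    rw [mul_pow, mul_pow ψ, Ne, mul_left_inj' (pow_ne_zero 3 hι0)]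
    exact fun h => hψφ (by linear_combination -h)
  simp only [map_one, map_pow, map_mul]
  refine MvPolynomial.span_eq_top_of_mul_X_mem (Ideal.Quotient.mkₐ k J)
    (Ideal.Quotient.mkₐ_surjective k J) (by simp) fun i => ?_
  exact hH.mul_mem_span_of_mem (by simp [hφ, hι0]) (by simp [hψ, hι0]) hαβ _
    (by fin_cases i <;> simp)
end

section
/- Assume φ ≠ 0, ψ ≠ 0 and ψ³ ≠ 27φ³. Let σ be the k-algebra automorphism of k[x₁,x₂,x₃] determined by σ(xᵢ) = ρ·xᵢ for i = 1, 2, 3. Then σ maps the Jacobian ideal J into itself, so it induces a k-linear automorphism σ̄ of Jac(W) = k[x₁,x₂,x₃]/J, and the subspace of σ̄-fixed elements of Jac(W) is spanned over k by the classes of 1 and x₁x₂x₃. (This identifies the ℤ/3-invariant part of Jac(W), i.e. the untwisted sector of the orbifold Jacobian algebra Jac(W, ℤ/3).) -/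
/-!
Put c = ψ/(3φ). Up to the unit -3φι, the partial derivatives of W are xᵢ² - c·xⱼxₖ, so modulo J
we have x₁²x₂ = c·x₂²x₃ = c²·x₃²x₁ = c³·x₁²x₂; as c³ ≠ 1, the monomials xᵢ²xⱼ (i ≠ j) vanish in
Jac(W). Hence every monomial of degree ≥ 4 vanishes and xᵢ³ = c·x₁x₂x₃. The automorphism σ scales
a monomial of degree n by ρⁿ, so 1 + σ + σ² annihilates the monomials of degree prime to 3, and a
σ̄-fixed class x satisfies 3x = (1 + σ̄ + σ̄²)x, the class of a combination of monomials of degree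
divisible by 3.
-/

open MvPolynomial

section

variable {k A : Type*} [Field k] [CommRing A] [Algebra k A]

structure HesseRelations_s8 (c : k) (x y z : A) : Prop where
  sq_left : x ^ 2 = c • (y * z)
  sq_mid : y ^ 2 = c • (z * x)
  sq_right : z ^ 2 = c • (x * y)

namespace HesseRelations_s8

variable {c : k} {x y z : A}

theorem rotate_s8 (h : HesseRelations_s8 c x y z) : HesseRelations_s8 c y z x :=
  ⟨h.sq_mid, h.sq_right, h.sq_left⟩

theorem swap_s8 (h : HesseRelations_s8 c x y z) : HesseRelations_s8 c x z y :=
  ⟨by rw [h.sq_left, mul_comm], by rw [h.sq_right, mul_comm], by rw [h.sq_mid, mul_comm]⟩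

theorem sq_mul_eq_zero_s8 (h : HesseRelations_s8 c x y z) (hc : c ^ 3 ≠ 1) : x ^ 2 * y = 0 := by
  have hx := h.sq_left; have hy := h.sq_mid; have hz := h.sq_right
  rw [Algebra.smul_def] at hx hy hz
  have hsmul : (1 - c ^ 3) • (x ^ 2 * y) = 0 := by
    rw [Algebra.smul_def, map_sub, map_one, map_pow]
    linear_combination y * hx + algebraMap k A c * z * hy + algebraMap k A c ^ 2 * x * hz
  exact (smul_eq_zero.1 hsmul).resolve_left (sub_ne_zero.2 hc.symm)

theorem mul_mul_mul_eq_zero (h : HesseRelations_s8 c x y z) (hc : c ^ 3 ≠ 1) :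
    x * (x * y * z) = 0 := by
  rw [show x * (x * y * z) = x ^ 2 * y * z by ring, h.sq_mul_eq_zero_s8 hc, zero_mul]

theorem pow_mul_pow_mul_pow_mem_span_of_two_le (h : HesseRelations_s8 c x y z) (hc : c ^ 3 ≠ 1)
    {a b d : ℕ} (ha : 2 ≤ a) (habd : 3 ≤ a + b + d) :
    x ^ a * y ^ b * z ^ d ∈ k ∙ (x * y * z) := by
  obtain ⟨a, rfl⟩ := Nat.exists_eq_add_of_le' ha
  by_cases hb : 1 ≤ b
  · obtain ⟨b, rfl⟩ := Nat.exists_eq_add_of_le' hb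
    rw [show x ^ (a + 2) * y ^ (b + 1) * z ^ d = x ^ 2 * y * (x ^ a * y ^ b * z ^ d) by ring,
      h.sq_mul_eq_zero_s8 hc, zero_mul]
    exact zero_mem _
  by_cases hd : 1 ≤ d
  · obtain ⟨d, rfl⟩ := Nat.exists_eq_add_of_le' hd
    rw [show x ^ (a + 2) * y ^ b * z ^ (d + 1) = x ^ 2 * z * (x ^ a * y ^ b * z ^ d) by ring,
      h.swap_s8.sq_mul_eq_zero_s8 hc, zero_mul]
    exact zero_mem _
  obtain ⟨a, rfl⟩ := Nat.exists_eq_add_of_le' (show 1 ≤ a by omega)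
  obtain rfl : b = 0 := by omega
  obtain rfl : d = 0 := by omega
  have hcube : x ^ (a + 1 + 2) * y ^ 0 * z ^ 0 = c • (x ^ a * (x * y * z)) := by
    have hx := h.sq_left
    rw [Algebra.smul_def] at hx ⊢
    linear_combination x ^ (a + 1) * hx
  rw [hcube]
  refine Submodule.smul_mem _ _ ?_
  rcases a with _ | a
  · simp
  · rw [pow_succ, mul_assoc (x ^ a), h.mul_mul_mul_eq_zero hc, mul_zero]
    exact zero_mem _

theorem pow_mul_pow_mul_pow_mem_span_of_three_le (h : HesseRelations_s8 c x y z)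
    (hc : c ^ 3 ≠ 1) {a b d : ℕ} (habd : 3 ≤ a + b + d) :
    x ^ a * y ^ b * z ^ d ∈ k ∙ (x * y * z) := by
  rcases (by omega : 2 ≤ a ∨ 2 ≤ b ∨ 2 ≤ d ∨ (a = 1 ∧ b = 1 ∧ d = 1)) with
    ha | hb | hd | ⟨rfl, rfl, rfl⟩
  · exact h.pow_mul_pow_mul_pow_mem_span_of_two_le hc ha habd
  · rw [show x * y * z = y * z * x by ring,
      show x ^ a * y ^ b * z ^ d = y ^ b * z ^ d * x ^ a by ring]
    exact h.rotate_s8.pow_mul_pow_mul_pow_mem_span_of_two_le hc hb (by omega)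
  · rw [show x * y * z = z * x * y by ring,
      show x ^ a * y ^ b * z ^ d = z ^ d * x ^ a * y ^ b by ring]
    exact h.rotate_s8.rotate_s8.pow_mul_pow_mul_pow_mem_span_of_two_le hc hd (by omega)
  · simp

theorem pow_mul_pow_mul_pow_mem_span (h : HesseRelations_s8 c x y z) (hc : c ^ 3 ≠ 1)
    {a b d : ℕ} (habd : 3 ∣ a + b + d) :
    x ^ a * y ^ b * z ^ d ∈ Submodule.span k {1, x * y * z} := by
  rcases Nat.eq_zero_or_pos (a + b + d) with h0 | hpos
  · obtain ⟨rfl, rfl, rfl⟩ : a = 0 ∧ b = 0 ∧ d = 0 := by omega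
    simpa using Submodule.subset_span (Set.mem_insert _ _)
  · refine Submodule.span_mono (Set.subset_insert _ _) ?_
    exact h.pow_mul_pow_mul_pow_mem_span_of_three_le hc (Nat.le_of_dvd hpos habd)

end HesseRelations_s8

end

theorem MvPolynomial.aeval_C_mul_X_monomial {σ R : Type*} [CommSemiring R] (r a : R)
    (u : σ →₀ ℕ) :
    aeval (fun i => C r * X i) (monomial u a) = monomial u (r ^ u.degree * a) := by
  rw [aeval_monomial, monomial_eq, algebraMap_eq, Finsupp.degree_apply, C_mul, C_pow,
    ← Finset.prod_pow_eq_pow_sum]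
  simp only [mul_pow, Finsupp.prod_mul]
  unfold Finsupp.prod
  ring

theorem one_add_pow_add_pow_sq_eq_zero {k : Type*} [CommRing k] {ρ : k} (hρ : ρ ^ 2 + ρ + 1 = 0)
    {n : ℕ} (hn : ¬ 3 ∣ n) : 1 + ρ ^ n + (ρ ^ n) ^ 2 = 0 := by
  have hρ3 : ρ ^ 3 = 1 := by linear_combination (ρ - 1) * hρ
  rw [← Nat.div_add_mod n 3, pow_add, pow_mul, hρ3, one_pow, one_mul]
  rcases (by omega : n % 3 = 1 ∨ n % 3 = 2) with h | h <;> rw [h]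
  · linear_combination hρ
  · linear_combination (ρ ^ 2 - ρ + 1) * hρ

theorem MvPolynomial.add_aeval_add_aeval_mem_span {σ k : Type*} [CommRing k] {ρ : k}
    (hρ : ρ ^ 2 + ρ + 1 = 0) (p : MvPolynomial σ k) :
    p + aeval (fun i => C ρ * X i) p + aeval (fun i => C ρ * X i) (aeval (fun i => C ρ * X i) p)
      ∈ Submodule.span k ((monomial · 1) '' {u | 3 ∣ u.degree}) := by
  rw [p.as_sum]
  simp only [map_sum, aeval_C_mul_X_monomial, ← Finset.sum_add_distrib, ← map_add]
  refine Submodule.sum_mem _ fun u _ => ?_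
  rw [show coeff u p + ρ ^ u.degree * coeff u p + ρ ^ u.degree * (ρ ^ u.degree * coeff u p)
      = ((1 + ρ ^ u.degree + (ρ ^ u.degree) ^ 2) * coeff u p) • 1 by ring, ← smul_monomial]
  by_cases hu : 3 ∣ u.degree
  · exact Submodule.smul_mem _ _ (Submodule.subset_span ⟨u, hu, rfl⟩)
  · rw [one_add_pow_add_pow_sq_eq_zero hρ hu, zero_mul, zero_smul]
    exact zero_mem _

theorem MvPolynomial.mem_of_isFixedPt_of_monomial_mem {σ k : Type*} [Field k] {ρ : k}
    (hρ : ρ ^ 2 + ρ + 1 = 0) (h3 : (3 : k) ≠ 0) {J : Ideal (MvPolynomial σ k)}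
    {S : Submodule k (MvPolynomial σ k ⧸ J)}
    (hS : ∀ u : σ →₀ ℕ, 3 ∣ u.degree → Ideal.Quotient.mk J (monomial u 1) ∈ S)
    (T : (MvPolynomial σ k ⧸ J) →ₗ[k] MvPolynomial σ k ⧸ J)
    (hT : ∀ p, T (Ideal.Quotient.mk J p) = Ideal.Quotient.mk J (aeval (fun i => C ρ * X i) p))
    {x : MvPolynomial σ k ⧸ J} (hx : Function.IsFixedPt T x) : x ∈ S := by
  obtain ⟨p, rfl⟩ := Ideal.Quotient.mk_surjective x
  have h1 : Ideal.Quotient.mk J (aeval (fun i => C ρ * X i) p) = Ideal.Quotient.mk J p :=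
    (hT p).symm.trans hx
  have h2 : Ideal.Quotient.mk J (aeval (fun i => C ρ * X i) (aeval (fun i => C ρ * X i) p))
      = Ideal.Quotient.mk J p := by
    rw [← hT, h1, hx]
  have hspan : Submodule.span k ((monomial · 1) '' {u | 3 ∣ u.degree})
      ≤ S.comap (Ideal.Quotient.mkₐ k J).toLinearMap :=
    Submodule.span_le.2 (by rintro _ ⟨u, hu, rfl⟩; exact hS u hu)
  have hmem := hspan (add_aeval_add_aeval_mem_span hρ p)
  rw [Submodule.mem_comap, AlgHom.toLinearMap_apply, Ideal.Quotient.mkₐ_eq_mk, map_add, map_add,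
    h1, h2] at hmem
  rw [← Submodule.smul_mem_iff S h3]
  convert hmem using 1
  module

noncomputable def hessePotential {k : Type*} [CommRing k] (ι φ ψ : k) : MvPolynomial (Fin 3) k :=
  -(C φ * C ι) * (X 0 ^ 3 + X 1 ^ 3 + X 2 ^ 3) + C ψ * C ι * (X 0 * X 1 * X 2)

noncomputable def hesseJacobianIdeal {k : Type*} [CommRing k] (ι φ ψ : k) :
    Ideal (MvPolynomial (Fin 3) k) :=
  Ideal.span {pderiv 0 (hessePotential ι φ ψ), pderiv 1 (hessePotential ι φ ψ),
    pderiv 2 (hessePotential ι φ ψ)}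

section

variable {k : Type*} [Field k] {ι φ ψ : k}

theorem pderiv_mem_hesseJacobianIdeal (i : Fin 3) :
    pderiv i (hessePotential ι φ ψ) ∈ hesseJacobianIdeal ι φ ψ := by
  fin_cases i <;> exact Ideal.subset_span (by simp)

theorem pderiv_hessePotential (i : Fin 3) :
    pderiv i (hessePotential ι φ ψ)
      = (ψ * ι) • (X (i + 1) * X (i + 2)) - (3 * φ * ι) • X i ^ 2 := by
  fin_cases i <;>
  · simp only [hessePotential, smul_eq_C_mul, map_add, map_mul, map_neg, map_ofNat,
      Derivation.leibniz, Derivation.leibniz_pow, pderiv_X, pderiv_C, Pi.single_apply,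
      Fin.zero_eta, Fin.mk_one, Fin.reduceFinMk, Fin.reduceEq, Fin.reduceAdd, Fin.isValue,
      reduceIte, smul_eq_mul, nsmul_eq_mul]
    ring

theorem aeval_C_mul_X_pderiv_hessePotential (ρ : k) (i : Fin 3) :
    aeval (fun j => C ρ * X j) (pderiv i (hessePotential ι φ ψ))
      = C (ρ ^ 2) * pderiv i (hessePotential ι φ ψ) := by
  simp only [pderiv_hessePotential, smul_eq_C_mul, map_sub, map_mul, map_pow, aeval_C, aeval_X,
    algebraMap_eq]
  ring

theorem hesseJacobianIdeal_le_comap (ρ : k) :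
    hesseJacobianIdeal ι φ ψ ≤ (hesseJacobianIdeal ι φ ψ).comap (aeval fun i => C ρ * X i) := by
  rw [hesseJacobianIdeal, Ideal.span_le]
  rintro _ (rfl | rfl | rfl) <;>
  · rw [SetLike.mem_coe, Ideal.mem_comap, aeval_C_mul_X_pderiv_hessePotential]
    exact Ideal.mul_mem_left _ _ (pderiv_mem_hesseJacobianIdeal _)

theorem mk_X_sq_eq (h3 : (3 : k) ≠ 0) (hφ : φ ≠ 0) (hι : ι ≠ 0)
    {J : Ideal (MvPolynomial (Fin 3) k)} {i : Fin 3} (hJ : pderiv i (hessePotential ι φ ψ) ∈ J) :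
    Ideal.Quotient.mk J (X i) ^ 2
      = (ψ / (3 * φ)) • (Ideal.Quotient.mk J (X (i + 1)) * Ideal.Quotient.mk J (X (i + 2))) := by
  have h := Ideal.Quotient.eq_zero_iff_mem.2 hJ
  rw [pderiv_hessePotential, ← Ideal.Quotient.mkₐ_eq_mk k, map_sub, map_smul, map_smul,
    sub_eq_zero, map_mul, map_pow, Ideal.Quotient.mkₐ_eq_mk] at h
  have hne : 3 * φ * ι ≠ 0 := by positivity
  rw [← inv_smul_smul₀ hne (Ideal.Quotient.mk J (X i) ^ 2), ← h, smul_smul]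
  congr 1
  field_simp

theorem hesseRelations_mk_X (h3 : (3 : k) ≠ 0) (hφ : φ ≠ 0) (hι : ι ≠ 0)
    {J : Ideal (MvPolynomial (Fin 3) k)} (hJ : ∀ i, pderiv i (hessePotential ι φ ψ) ∈ J) :
    HesseRelations_s8 (ψ / (3 * φ)) (Ideal.Quotient.mk J (X 0)) (Ideal.Quotient.mk J (X 1))
      (Ideal.Quotient.mk J (X 2)) :=
  ⟨mk_X_sq_eq h3 hφ hι (hJ 0), mk_X_sq_eq h3 hφ hι (hJ 1), mk_X_sq_eq h3 hφ hι (hJ 2)⟩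

end

theorem Ideal.Quotient.mk_monomial_fin_three {k : Type*} [CommRing k]
    (J : Ideal (MvPolynomial (Fin 3) k)) (u : Fin 3 →₀ ℕ) :
    Ideal.Quotient.mk J (monomial u 1) = Ideal.Quotient.mk J (X 0) ^ u 0
      * Ideal.Quotient.mk J (X 1) ^ u 1 * Ideal.Quotient.mk J (X 2) ^ u 2 := by
  rw [monomial_eq, C_1, one_mul, Finsupp.prod_fintype _ _ (fun i => pow_zero _),
    Fin.prod_univ_three, map_mul, map_mul, map_pow, map_pow, map_pow]

theorem stmt8_general (k : Type*) [Field k] [CharZero k] (ι ρ φ ψ : k)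
    (hι : ι ^ 2 = -1) (hρ : ρ ^ 2 + ρ + 1 = 0)
    (hφ : φ ≠ 0) (hψφ : ψ ^ 3 ≠ 27 * φ ^ 3)
    (W : MvPolynomial (Fin 3) k)
    (hW : W = -(C φ * C ι) * (X 0 ^ 3 + X 1 ^ 3 + X 2 ^ 3)
        + C ψ * C ι * (X 0 * X 1 * X 2))
    (J : Ideal (MvPolynomial (Fin 3) k))
    (hJ : J = Ideal.span {pderiv 0 W, pderiv 1 W, pderiv 2 W})
    (σ : MvPolynomial (Fin 3) k →ₐ[k] MvPolynomial (Fin 3) k)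
    (hσ : σ = aeval fun i => C ρ * X i) :
    (∀ p ∈ J, σ p ∈ J) ∧
    ∀ σbar : (MvPolynomial (Fin 3) k ⧸ J) →ₗ[k] (MvPolynomial (Fin 3) k ⧸ J),
      (∀ p : MvPolynomial (Fin 3) k,
          σbar (Ideal.Quotient.mk J p) = Ideal.Quotient.mk J (σ p)) →
      {x : MvPolynomial (Fin 3) k ⧸ J | σbar x = x}
        = (Submodule.span k
            ({Ideal.Quotient.mk J 1, Ideal.Quotient.mk J (X 0 * X 1 * X 2)} :
              Set (MvPolynomial (Fin 3) k ⧸ J)) : Set (MvPolynomial (Fin 3) k ⧸ J)) := by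
  replace hW : W = hessePotential ι φ ψ := hW
  subst hW
  replace hJ : J = hesseJacobianIdeal ι φ ψ := hJ
  subst hJ hσ
  have hι0 : ι ≠ 0 := by rintro rfl; norm_num at hι
  have hc : (ψ / (3 * φ)) ^ 3 ≠ 1 := by
    rw [div_pow, mul_pow, ne_eq, div_eq_one_iff_eq (by simp [hφ])]
    norm_num [hψφ]
  have hrel := hesseRelations_mk_X (ψ := ψ) three_ne_zero hφ hι0 pderiv_mem_hesseJacobianIdeal
  refine ⟨fun p hp => hesseJacobianIdeal_le_comap ρ hp, fun σbar hσbar => ?_⟩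
  rw [map_one, map_mul, map_mul]
  refine Set.Subset.antisymm (fun x hx => ?_) ?_
  · refine mem_of_isFixedPt_of_monomial_mem hρ three_ne_zero (fun u hu => ?_) σbar hσbar hx
    rw [Finsupp.degree_eq_sum, Fin.sum_univ_three] at hu
    rw [Ideal.Quotient.mk_monomial_fin_three]
    exact hrel.pow_mul_pow_mul_pow_mem_span hc hu
  · have hρ3 : C ρ ^ 3 = (1 : MvPolynomial (Fin 3) k) := by
      rw [← map_pow, show ρ ^ 3 = 1 by linear_combination (ρ - 1) * hρ, map_one]
    refine Submodule.span_le (p := LinearMap.eqLocus σbar LinearMap.id) |>.2 ?_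
    rintro _ (rfl | rfl) <;> simp only [SetLike.mem_coe, LinearMap.mem_eqLocus, LinearMap.id_apply]
    · rw [← map_one (Ideal.Quotient.mk _), hσbar, map_one]
    · rw [← map_mul, ← map_mul, hσbar]
      congr 1
      simp only [map_mul, aeval_X]
      linear_combination (X 0 * X 1 * X 2) * hρ3

/-- For `W = −φι(x₁³+x₂³+x₃³) + ψι·x₁x₂x₃` with `φ ≠ 0`, `ψ ≠ 0`, `ψ³ ≠ 27φ³`, and
`σ` the `k`-algebra automorphism with `σ(xᵢ) = ρxᵢ`: `σ` maps the Jacobian ideal `J`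
into itself, and any induced `k`-linear map `σ̄` on `Jac(W) = k[x₁,x₂,x₃]/J` has fixed
subspace spanned over `k` by the classes of `1` and `x₁x₂x₃`. -/
theorem stmt8 (k : Type*) [Field k] [CharZero k] (ι ρ φ ψ : k)
    (hι : ι ^ 2 = -1) (hρ : ρ ^ 2 + ρ + 1 = 0)
    (hφ : φ ≠ 0) (hψ : ψ ≠ 0) (hψφ : ψ ^ 3 ≠ 27 * φ ^ 3)
    (W : MvPolynomial (Fin 3) k)
    (hW : W = -(C φ * C ι) * (X 0 ^ 3 + X 1 ^ 3 + X 2 ^ 3)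
        + C ψ * C ι * (X 0 * X 1 * X 2))
    (J : Ideal (MvPolynomial (Fin 3) k))
    (hJ : J = Ideal.span {pderiv 0 W, pderiv 1 W, pderiv 2 W})
    (σ : MvPolynomial (Fin 3) k →ₐ[k] MvPolynomial (Fin 3) k)
    (hσ : σ = aeval fun i => C ρ * X i) :
    (∀ p ∈ J, σ p ∈ J) ∧
    ∀ σbar : (MvPolynomial (Fin 3) k ⧸ J) →ₗ[k] (MvPolynomial (Fin 3) k ⧸ J),
      (∀ p : MvPolynomial (Fin 3) k,
          σbar (Ideal.Quotient.mk J p) = Ideal.Quotient.mk J (σ p)) →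
      {x : MvPolynomial (Fin 3) k ⧸ J | σbar x = x}
        = (Submodule.span k
            ({Ideal.Quotient.mk J 1, Ideal.Quotient.mk J (X 0 * X 1 * X 2)} :
              Set (MvPolynomial (Fin 3) k ⧸ J)) : Set (MvPolynomial (Fin 3) k ⧸ J)) :=
  stmt8_general k ι ρ φ ψ hι hρ hφ hψφ W hW J hJ σ hσ
end

section
/- Let R be a commutative ring and u₁, u₂, u₃, f₁, f₂, f₃, c₁₂, c₁₃, c₂₃, c ∈ R. Let M be the 8×8 matrix over R whose rows are: (0,0,0,0,0,u₁,u₂,u₃), (0,0,0,0,u₁,0,c₁₂,c₁₃), (0,0,0,0,u₂,−c₁₂,0,c₂₃), (0,0,0,0,u₃,−c₁₃,−c₂₃,0), (0,f₁,f₂,f₃,0,0,0,0), (f₁,0,u₃,−u₂,0,0,0,0), (f₂,−u₃,0,u₁,0,0,0,0), (f₃,u₂,−u₁,0,0,0,0,0). If M² = c·Id₈ (that is, M is a matrix factorization of c), then c = u₁f₁ + u₂f₂ + u₃f₃, and the relations f₂c₁₂ + f₃c₁₃ = 0, f₁c₁₂ − f₃c₂₃ = 0, f₁c₁₃ + f₂c₂₃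 = 0 hold. (In the paper, uᵢ = yᵢ − xᵢ and c = W(y) − W(x), and these are the relations W(y) − W(x) = Σᵢ(yᵢ−xᵢ)fᵢ together with −f₂c₁₂ + f₃c₃₁ = 0, f₁c₁₂ − f₃c₂₃ = 0, −f₁c₃₁ + f₂c₂₃ = 0 where c₃₁ = −c₁₃, derived from the matrix factorization of W(y) − W(x) associated to the Seidel Lagrangian in P¹_{a,b,c}.) -/
/-!
Only the first column of `M²` is needed. The first column of `M` is `(0, 0, 0, 0, 0, f₁, f₂, f₃)`,
so the first column of `M²` is `(u₁f₁ + u₂f₂ + u₃f₃, f₂c₁₂ + f₃c₁₃, f₃c₂₃ - f₁c₁₂,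
-(f₁c₁₃ + f₂c₂₃), 0, 0, 0, 0)`, and comparing it with the first column of `c • 1` gives the four
relations.
-/

section

variable {R : Type*} [CommRing R]

def seidelMatrix (u₁ u₂ u₃ f₁ f₂ f₃ c₁₂ c₁₃ c₂₃ : R) : Matrix (Fin 8) (Fin 8) R :=
  !![0, 0, 0, 0, 0, u₁, u₂, u₃;
     0, 0, 0, 0, u₁, 0, c₁₂, c₁₃;
     0, 0, 0, 0, u₂, -c₁₂, 0, c₂₃;
     0, 0, 0, 0, u₃, -c₁₃, -c₂₃, 0;
     0, f₁, f₂, f₃, 0, 0, 0, 0;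
     f₁, 0, u₃, -u₂, 0, 0, 0, 0;
     f₂, -u₃, 0, u₁, 0, 0, 0, 0;
     f₃, u₂, -u₁, 0, 0, 0, 0, 0]

theorem seidelMatrix_mul_self_col_zero (u₁ u₂ u₃ f₁ f₂ f₃ c₁₂ c₁₃ c₂₃ : R) :
    (fun i ↦ (seidelMatrix u₁ u₂ u₃ f₁ f₂ f₃ c₁₂ c₁₃ c₂₃ *
      seidelMatrix u₁ u₂ u₃ f₁ f₂ f₃ c₁₂ c₁₃ c₂₃) i 0) =
      ![u₁ * f₁ + u₂ * f₂ + u₃ * f₃, f₂ * c₁₂ + f₃ * c₁₃, -(f₁ * c₁₂ - f₃ * c₂₃),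
        -(f₁ * c₁₃ + f₂ * c₂₃), 0, 0, 0, 0] := by
  ext i
  fin_cases i <;>
    simp [seidelMatrix, Matrix.mul_apply, Fin.sum_univ_succ] <;> ring

end

/-- If the 8×8 matrix `M` arising from the Seidel Lagrangian Floer complex is a matrix
factorization of `c` (i.e. `M² = c·Id₈`), then `c = u₁f₁ + u₂f₂ + u₃f₃` and the
relations `f₂c₁₂ + f₃c₁₃ = 0`, `f₁c₁₂ − f₃c₂₃ = 0`, `f₁c₁₃ + f₂c₂₃ = 0` hold. -/
theorem stmt9 (R : Type*) [CommRing R]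
    (u₁ u₂ u₃ f₁ f₂ f₃ c₁₂ c₁₃ c₂₃ c : R)
    (M : Matrix (Fin 8) (Fin 8) R)
    (hM : M = !![0, 0, 0, 0, 0, u₁, u₂, u₃;
                 0, 0, 0, 0, u₁, 0, c₁₂, c₁₃;
                 0, 0, 0, 0, u₂, -c₁₂, 0, c₂₃;
                 0, 0, 0, 0, u₃, -c₁₃, -c₂₃, 0;
                 0, f₁, f₂, f₃, 0, 0, 0, 0;
                 f₁, 0, u₃, -u₂, 0, 0, 0, 0;
                 f₂, -u₃, 0, u₁, 0, 0, 0, 0;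
                 f₃, u₂, -u₁, 0, 0, 0, 0, 0])
    (hfac : M * M = c • (1 : Matrix (Fin 8) (Fin 8) R)) :
    c = u₁ * f₁ + u₂ * f₂ + u₃ * f₃ ∧
    f₂ * c₁₂ + f₃ * c₁₃ = 0 ∧
    f₁ * c₁₂ - f₃ * c₂₃ = 0 ∧
    f₁ * c₁₃ + f₂ * c₂₃ = 0 := by
  have hcol := seidelMatrix_mul_self_col_zero u₁ u₂ u₃ f₁ f₂ f₃ c₁₂ c₁₃ c₂₃
  have hone : (fun i ↦ (c • 1 : Matrix (Fin 8) (Fin 8) R) i 0) = ![c, 0, 0, 0, 0, 0, 0, 0] := by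
    ext i
    fin_cases i <;> simp
  rw [← show M = seidelMatrix u₁ u₂ u₃ f₁ f₂ f₃ c₁₂ c₁₃ c₂₃ from hM, hfac, hone] at hcol
  simp only [Matrix.vecCons_inj] at hcol
  obtain ⟨h0, h1, h2, h3, -⟩ := hcol
  exact ⟨by linear_combination h0, by linear_combination -h1, by linear_combination h2,
    by linear_combination h3⟩
end
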